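/- Let k be a commutative ring, A a commutative unital associative k-algebra, and * a formal star product on A with first-order term B₁. Then the bracket {f,g} := B₁(f,g) − B₁(g,f) endows A with the structure of a Poisson algebra over k: { , } is k-bilinear, antisymmetric, satisfies the Jacobi identity, and is a derivation of the commutative product in each argument. -/

import Mathlib

/-- A formal star product on a commutative unital `k`-algebra `A`: an associative,
`k[[ℏ]]`-bilinear product on `A[[ℏ]] = PowerSeries A`, determined on constant series by a
sequence of `k`-bilinear maps `B n : A → A → A` via `f * g = Σ_{n≥0} ℏⁿ Bₙ(f,g)`,
with zeroth term the original commutative product. -/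
structure FormalStarProduct (k A : Type*) [CommRing k] [CommRing A] [Algebra k A] where
  /-- the star product on `A[[ℏ]]` -/
  smul' : PowerSeries A → PowerSeries A → PowerSeries A
  /-- the sequence of `k`-bilinear maps `Bₙ` -/
  B : ℕ → A →ₗ[k] A →ₗ[k] A
  add_left : ∀ f g h : PowerSeries A, smul' (f + g) h = smul' f h + smul' g h
  add_right : ∀ f g h : PowerSeries A, smul' f (g + h) = smul' f g + smul' f h
  hbar_smul_left : ∀ (c : PowerSeries k) (f g : PowerSeries A),
      smul' (c • f) g = c • smul' f g
  hbar_smul_right : ∀ (c : PowerSeries k) (f g : PowerSeries A),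
      smul' f (c • g) = c • smul' f g
  assoc : ∀ f g h : PowerSeries A, smul' (smul' f g) h = smul' f (smul' g h)
  star_eq : ∀ f g : A,
      smul' (PowerSeries.C f) (PowerSeries.C g) = PowerSeries.mk fun n => B n f g
  B_zero : ∀ f g : A, B 0 f g = f * g

/-!
The star product is only `k⟦ℏ⟧`-bilinear, not assumed `ℏ`-adically continuous, so its
coefficients on constant series are computed by splitting off one constant coefficient at a
time. Associativity then reads, order by order,
`Σ_{i+j=n} Bᵢ(Bⱼ(f,g),h) = Σ_{i+j=n} Bᵢ(f,Bⱼ(g,h))`. At order 1 this says that `B₁` is a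
Hochschild 2-cocycle of the commutative algebra `A`, so its antisymmetrization is a
biderivation. At order 2 it says that `δB₂` is the associator of `B₁`; the alternating sum of
`δB₂` over the permutations of `(f,g,h)` vanishes because `A` is commutative, and the
alternating sum of the associators of `B₁` is the Jacobiator of its antisymmetrization.
-/

open PowerSeries Finset Finset.Nat

lemma PowerSeries.X_smul_eq_X_mul {k A : Type*} [CommRing k] [CommRing A] [Algebra k A]
    (F : A⟦X⟧) : (X : k⟦X⟧) • F = X * F := by
  rw [Algebra.smul_def, algebraMap_apply'', map_X]

section Hochschild

variable {A : Type*} [CommRing A]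

def hochschildCoboundary (C : A → A → A) (f g h : A) : A :=
  f * C g h - C (f * g) h + C f (g * h) - C f g * h

theorem sub_swap_mul_right_of_hochschildCoboundary_eq_zero {C : A → A → A}
    (hC : ∀ f g h, hochschildCoboundary C f g h = 0) (f g h : A) :
    C f (g * h) - C (g * h) f = (C f g - C g f) * h + g * (C f h - C h f) := by
  have hfgh := hC f g h
  have hgfh := hC g f h
  have hghf := hC g h f
  unfold hochschildCoboundary at hfgh hgfh hghf
  rw [mul_comm g f] at hgfh
  rw [mul_comm h f] at hghf
  linear_combination hfgh - hgfh + hghf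

theorem hochschildCoboundary_alternating_sum (C : A → A → A) (f g h : A) :
    hochschildCoboundary C f g h - hochschildCoboundary C f h g - hochschildCoboundary C g f h
      + hochschildCoboundary C g h f + hochschildCoboundary C h f g
      - hochschildCoboundary C h g f = 0 := by
  unfold hochschildCoboundary
  rw [mul_comm g f, mul_comm h f, mul_comm h g]
  ring

end Hochschild

namespace FormalStarProduct

variable {k A : Type*} [CommRing k] [CommRing A] [Algebra k A] (S : FormalStarProduct k A)

lemma smul'_C_right_eq (F : A⟦X⟧) (h : A) :
    S.smul' F (C h) = PowerSeries.mk (fun n => S.B n (coeff 0 F) h)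
      + (X : k⟦X⟧) • S.smul' (PowerSeries.mk fun p => coeff (p + 1) F) (C h) := by
  conv_lhs => rw [eq_X_mul_shift_add_const F, add_comm, ← X_smul_eq_X_mul (k := k)]
  rw [S.add_left, S.hbar_smul_left, S.star_eq, coeff_zero_eq_constantCoeff_apply]

lemma smul'_C_left_eq (f : A) (G : A⟦X⟧) :
    S.smul' (C f) G = PowerSeries.mk (fun n => S.B n f (coeff 0 G))
      + (X : k⟦X⟧) • S.smul' (C f) (PowerSeries.mk fun p => coeff (p + 1) G) := by
  conv_lhs => rw [eq_X_mul_shift_add_const G, add_comm, ← X_smul_eq_X_mul (k := k)]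
  rw [S.add_right, S.hbar_smul_right, S.star_eq, coeff_zero_eq_constantCoeff_apply]

lemma coeff_smul'_C_right (n : ℕ) (F : A⟦X⟧) (h : A) :
    coeff n (S.smul' F (C h)) = ∑ p ∈ antidiagonal n, S.B p.1 (coeff p.2 F) h := by
  induction n generalizing F with
  | zero => rw [smul'_C_right_eq, map_add, X_smul_eq_X_mul, coeff_zero_X_mul]; simp
  | succ n ih =>
    rw [smul'_C_right_eq, map_add, X_smul_eq_X_mul, coeff_succ_X_mul, ih, sum_antidiagonal_succ']
    simp

lemma coeff_smul'_C_left (n : ℕ) (f : A) (G : A⟦X⟧) :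
    coeff n (S.smul' (C f) G) = ∑ p ∈ antidiagonal n, S.B p.1 f (coeff p.2 G) := by
  induction n generalizing G with
  | zero => rw [smul'_C_left_eq, map_add, X_smul_eq_X_mul, coeff_zero_X_mul]; simp
  | succ n ih =>
    rw [smul'_C_left_eq, map_add, X_smul_eq_X_mul, coeff_succ_X_mul, ih, sum_antidiagonal_succ']
    simp

theorem sum_antidiagonal_B_assoc (f g h : A) (n : ℕ) :
    ∑ p ∈ antidiagonal n, S.B p.1 (S.B p.2 f g) h =
      ∑ p ∈ antidiagonal n, S.B p.1 f (S.B p.2 g h) := by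
  have h_assoc := congrArg (coeff n) (S.assoc (C f) (C g) (C h))
  simpa only [S.star_eq, coeff_smul'_C_right, coeff_smul'_C_left, coeff_mk] using h_assoc

theorem hochschildCoboundary_B_one (f g h : A) : hochschildCoboundary (S.B 1 · ·) f g h = 0 := by
  have h_assoc := S.sum_antidiagonal_B_assoc f g h 1
  simp only [sum_antidiagonal_succ, antidiagonal_zero, sum_singleton, S.B_zero] at h_assoc
  unfold hochschildCoboundary
  linear_combination -h_assoc

theorem hochschildCoboundary_B_two (f g h : A) :
    hochschildCoboundary (S.B 2 · ·) f g h = S.B 1 (S.B 1 f g) h - S.B 1 f (S.B 1 g h) := by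
  have h_assoc := S.sum_antidiagonal_B_assoc f g h 2
  simp only [sum_antidiagonal_succ, antidiagonal_zero, sum_singleton, S.B_zero] at h_assoc
  unfold hochschildCoboundary
  linear_combination -h_assoc

def bracket : A →ₗ[k] A →ₗ[k] A := S.B 1 - (S.B 1).flip

@[simp]
theorem bracket_apply (f g : A) : S.bracket f g = S.B 1 f g - S.B 1 g f := rfl

theorem bracket_swap (f g : A) : S.bracket g f = -S.bracket f g := by
  simp

theorem bracket_mul_right (f g h : A) :
    S.bracket f (g * h) = S.bracket f g * h + g * S.bracket f h := by
  simpa using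
    sub_swap_mul_right_of_hochschildCoboundary_eq_zero S.hochschildCoboundary_B_one f g h

theorem bracket_mul_left (f g h : A) :
    S.bracket (f * g) h = S.bracket f h * g + f * S.bracket g h := by
  rw [← neg_inj, ← bracket_swap, bracket_mul_right, S.bracket_swap f h, S.bracket_swap g h]
  ring

theorem bracket_jacobi (f g h : A) :
    S.bracket f (S.bracket g h) + S.bracket g (S.bracket h f) + S.bracket h (S.bracket f g) =
      0 := by
  have h_alt := hochschildCoboundary_alternating_sum (S.B 2 · ·) f g h
  simp only [hochschildCoboundary_B_two] at h_alt
  simp only [bracket_apply, map_sub]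
  linear_combination -h_alt

end FormalStarProduct

/-- the bracket `{f,g} := B₁(f,g) − B₁(g,f)` induced by a formal star
product endows `A` with a Poisson algebra structure over `k`: it is `k`-bilinear,
antisymmetric, satisfies the Jacobi identity, and is a derivation of the commutative
product in each argument. -/
theorem formalStarProduct_bracket_poisson
    {k A : Type*} [CommRing k] [CommRing A] [Algebra k A]
    (S : FormalStarProduct k A)
    (br : A → A → A) (hbr : ∀ f g : A, br f g = S.B 1 f g - S.B 1 g f) :
    -- `k`-bilinearity
    (∀ f g h : A, br (f + g) h = br f h + br g h) ∧
    (∀ f g h : A, br f (g + h) = br f g + br f h) ∧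
    (∀ (c : k) (f g : A), br (c • f) g = c • br f g) ∧
    (∀ (c : k) (f g : A), br f (c • g) = c • br f g) ∧
    -- antisymmetry
    (∀ f g : A, br f g = - br g f) ∧
    -- Jacobi identity
    (∀ f g h : A, br f (br g h) + br g (br h f) + br h (br f g) = 0) ∧
    -- Leibniz rule (derivation in each argument)
    (∀ f g h : A, br f (g * h) = br f g * h + g * br f h) ∧
    (∀ f g h : A, br (f * g) h = br f h * g + f * br g h) := by
  obtain rfl : br = fun f g => S.bracket f g := by
    funext f g
    rw [hbr, S.bracket_apply]
  exact ⟨fun f g h => by simp only [map_add, LinearMap.add_apply],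
    fun f g h => map_add _ g h,
    fun c f g => by simp only [map_smul, LinearMap.smul_apply],
    fun c f g => map_smul _ c g,
    fun f g => S.bracket_swap g f,
    S.bracket_jacobi, S.bracket_mul_right, S.bracket_mul_left⟩
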